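/- Let f : 2^N → ℝ be monotone, submodular and 3-increasing with f(∅) = 0, let each element of N have a positive cost, and let γ > 1. Let π be a permutation of N that has no swaps and no γ-moves with respect to the weighted coverage mff_π. Then for every integer ℓ > 0 and every set S* ⊆ N with f(S*) = f(N), the level L_ℓ := {u ∈ N : γ^ℓ ≤ mff_π(u) < γ^{ℓ+1}} satisfies c(L_ℓ) ≤ γ² · c(S*). -/

import Mathlib

/-!
Since `mff_π` is nonincreasing along `π`, the level `L_ℓ` is an interval `[p, e)` of positions.
Weighting each `u ∈ L_ℓ` by `c(u) · mff_π(u) ≥ γ^ℓ c(u)` and exchanging sums, for each `ψ_j`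
the mutual coverages of `π_p, …, π_{e-1}` with `ψ_j` telescope to at most
`f(ψ_j | π_{1:p} ∪ ψ_{1:j-1})`. As `S*` covers everything and mutual coverage only decreases
when the conditioning set grows (this is 3-increasingness), that marginal is at most
`∑_{s ∈ S*} I_f(s; ψ_j | π_{1:p} ∪ ψ_{1:j-1})`. Regrouped, this is `∑_{s ∈ S*} c(s)` times the
weighted coverage `s` would have at position `p`, which the absence of `γ`-moves and swaps
bounds by `γ · mff_π(π_p) < γ^{ℓ+2}`.
-/

open Finset

/-- The marginal value `f(A | C) := f(A ∪ C) - f(C)` of a set function. -/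
def margS {V : Type*} [DecidableEq V] (f : Finset V → ℝ) (A C : Finset V) : ℝ :=
  f (A ∪ C) - f C

/-- The conditional mutual coverage `I_f(A; B | C) := f(A|C) + f(B|C) - f(A ∪ B | C)`. -/
def mutcov {V : Type*} [DecidableEq V] (f : Finset V → ℝ) (A B C : Finset V) : ℝ :=
  margS f A C + margS f B C - margS f (A ∪ B) C

/-- The derivative of a set function `f` with respect to a set `A`:
`(df/dA)(S) := ∑_{B ⊆ A} (−1)^{|B|} f((S ∪ A) \ B)`. -/
def setDeriv {V : Type*} [DecidableEq V] (f : Finset V → ℝ) (A S : Finset V) : ℝ :=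
  ∑ B ∈ A.powerset, (-1 : ℝ) ^ B.card * f ((S ∪ A) \ B)

/-- The prefix `π_{1:i}` of a permutation `π` (0-indexed: the set of the first `i` elements). -/
def pref {V : Type*} [DecidableEq V] {n : ℕ} (π : Fin n → V) (i : ℕ) : Finset V :=
  (Finset.univ.filter fun j : Fin n => (j : ℕ) < i).image π

/-- The `(i,j)` mutual affinity of the pair of permutations `(α, β)`:
`I_{α,β}(α_i, β_j) := I_f(α_i; β_j | α_{1:i−1} ∪ β_{1:j−1})`. -/
def mfI {V : Type*} [DecidableEq V] {n : ℕ} (f : Finset V → ℝ) (a b : Fin n → V)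
    (i j : Fin n) : ℝ :=
  mutcov f {a i} {b j} (pref a i ∪ pref b j)

/-- The weighted coverage `mff_π(π_i) := ∑_j I_{π,ψ}(π_i, ψ_j) / (c(π_i)·c(ψ_j))`. -/
noncomputable def mffw {V : Type*} [Fintype V] [DecidableEq V] {n : ℕ} (f : Finset V → ℝ)
    (c : V → ℝ) (π ψ : Fin n → V) (i : Fin n) : ℝ :=
  ∑ j : Fin n, mfI f π ψ i j / (c (π i) * c (ψ j))

/-- The weighted coverage that the element `π_q` would have after being moved to position
`p`, i.e. `mff_{π′}(π′_p)` where `π′` is obtained from `π` by moving `π_q` to position `p`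
(the prefix of `π′` at position `p` is `π_{1:p−1}`). -/
noncomputable def mffwMove {V : Type*} [Fintype V] [DecidableEq V] {n : ℕ}
    (f : Finset V → ℝ) (c : V → ℝ) (π ψ : Fin n → V) (p q : Fin n) : ℝ :=
  ∑ j : Fin n, mutcov f {π q} {ψ j} (pref π p ∪ pref ψ j) / (c (π q) * c (ψ j))

section SetFunction

variable {V : Type*} [DecidableEq V] (f : Finset V → ℝ)

def IsSubmodular : Prop :=
  ∀ A B : Finset V, f (A ∪ B) + f (A ∩ B) ≤ f A + f B

def IsThreeIncreasing : Prop :=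
  ∀ S A : Finset V, A.card = 3 → 0 ≤ setDeriv f A S

lemma margS_nonneg (hmono : Monotone f) (A C : Finset V) :
    0 ≤ margS f A C :=
  sub_nonneg.2 (hmono subset_union_right)

lemma margS_eq_zero_of_subset [Fintype V] (hmono : Monotone f) {S C : Finset V}
    (hS : f S = f univ) (hSC : S ⊆ C) (A : Finset V) : margS f A C = 0 := by
  have h₁ := hmono (subset_univ (A ∪ C))
  have h₂ := hmono hSC
  have h₃ := hmono (subset_union_right (s₁ := A) (s₂ := C))
  simp only [margS]
  linarith

lemma margS_singleton_antitone (hmono : Monotone f) (hsub : IsSubmodular f) (a : V)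
    {C D : Finset V} (hCD : C ⊆ D) : margS f {a} D ≤ margS f {a} C := by
  by_cases haD : a ∈ D
  · rw [margS, union_eq_right.2 (singleton_subset_iff.2 haD), sub_self]
    exact margS_nonneg f hmono _ _
  · have hinter : ({a} ∪ C) ∩ D = C := by
      ext y
      simp only [mem_inter, mem_union, mem_singleton]
      constructor
      · rintro ⟨rfl | hy, hyD⟩
        exacts [absurd hyD haD, hy]
      · exact fun hy => ⟨Or.inr hy, hCD hy⟩
    have h := hsub ({a} ∪ C) D
    rw [hinter, union_assoc, union_eq_right.2 hCD] at h
    simp only [margS]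
    linarith

lemma mutcov_singleton_eq_sub (a b : V) (C : Finset V) :
    mutcov f {a} {b} C = margS f {b} C - margS f {b} (insert a C) := by
  have h : ({a} ∪ {b}) ∪ C = {b} ∪ insert a C := by
    ext y; simp only [mem_union, mem_insert, mem_singleton]; tauto
  simp only [mutcov, margS, h, insert_eq]
  ring

lemma mutcov_singleton_comm (a b : V) (C : Finset V) :
    mutcov f {a} {b} C = mutcov f {b} {a} C := by
  simp only [mutcov, union_comm ({a} : Finset V)]
  ring

lemma mutcov_singleton_self (a : V) (C : Finset V) : mutcov f {a} {a} C = margS f {a} C := by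
  simp only [mutcov, union_self]
  ring

lemma mutcov_singleton_eq_zero_of_mem_left {a : V} {C : Finset V} (ha : a ∈ C) (b : V) :
    mutcov f {a} {b} C = 0 := by
  rw [mutcov_singleton_eq_sub, insert_eq_self.2 ha, sub_self]

lemma mutcov_singleton_eq_zero_of_mem_right (a : V) {b : V} {C : Finset V} (hb : b ∈ C) :
    mutcov f {a} {b} C = 0 := by
  rw [mutcov_singleton_comm, mutcov_singleton_eq_zero_of_mem_left f hb]

lemma mutcov_singleton_nonneg (hmono : Monotone f) (hsub : IsSubmodular f) (a b : V)
    (C : Finset V) : 0 ≤ mutcov f {a} {b} C := by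
  rw [mutcov_singleton_eq_sub, sub_nonneg]
  exact margS_singleton_antitone f hmono hsub b (subset_insert a C)

lemma setDeriv_empty (S : Finset V) : setDeriv f ∅ S = f S := by
  simp [setDeriv]

lemma setDeriv_insert {x : V} {A S : Finset V} (hxA : x ∉ A) (hxS : x ∉ S) :
    setDeriv f (insert x A) S = setDeriv f A (insert x S) - setDeriv f A S := by
  rw [setDeriv, sum_powerset_insert hxA, setDeriv, setDeriv, sub_eq_add_neg, ← sum_neg_distrib]
  congr 1
  · refine sum_congr rfl fun B _ => ?_
    rw [union_insert, insert_union]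
  · refine sum_congr rfl fun B hB => ?_
    have hxB : x ∉ B := fun h => hxA (mem_powerset.1 hB h)
    have hdiff : (S ∪ insert x A) \ insert x B = (S ∪ A) \ B := by
      ext y
      simp only [mem_sdiff, mem_union, mem_insert]
      constructor
      · rintro ⟨h | rfl | h, hy⟩ <;> tauto
      · rintro ⟨h, hy⟩
        exact ⟨by tauto, fun h' => by rcases h' with rfl | h' <;> tauto⟩
    rw [card_insert_of_notMem hxB, hdiff, pow_succ]
    ring

lemma setDeriv_pair {a b : V} {C : Finset V} (hab : a ≠ b) (ha : a ∉ C) (hb : b ∉ C) :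
    setDeriv f {a, b} C = -mutcov f {a} {b} C := by
  have hsingle : ∀ {y : V} {D : Finset V}, y ∉ D → setDeriv f {y} D = f (insert y D) - f D :=
    fun hy => by rw [← insert_empty, setDeriv_insert f (notMem_empty _) hy, setDeriv_empty,
      setDeriv_empty]
  have hunion : ({a} ∪ {b}) ∪ C = insert b (insert a C) := by
    ext y; simp only [mem_union, mem_insert, mem_singleton]; tauto
  rw [setDeriv_insert f (by simpa using hab) ha, hsingle hb,
    hsingle (by simpa [eq_comm] using And.intro hab.symm hb)]
  simp only [mutcov, margS, hunion, insert_eq]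
  ring

lemma mutcov_singleton_insert_le (hmono : Monotone f) (hsub : IsSubmodular f)
    (h3 : IsThreeIncreasing f) (a b x : V) (C : Finset V) :
    mutcov f {a} {b} (insert x C) ≤ mutcov f {a} {b} C := by
  have hnonneg := mutcov_singleton_nonneg f hmono hsub a b C
  by_cases hxC : x ∈ C
  · rw [insert_eq_self.2 hxC]
  by_cases ha : a ∈ insert x C
  · rwa [mutcov_singleton_eq_zero_of_mem_left f ha]
  by_cases hb : b ∈ insert x C
  · rwa [mutcov_singleton_eq_zero_of_mem_right f a hb]
  simp only [mem_insert, not_or] at ha hb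
  by_cases hab : a = b
  · subst hab
    rw [mutcov_singleton_self, mutcov_singleton_self]
    exact margS_singleton_antitone f hmono hsub a (subset_insert x C)
  have hxab : x ∉ ({a, b} : Finset V) := by
    simp only [mem_insert, mem_singleton, not_or]
    exact ⟨Ne.symm ha.1, Ne.symm hb.1⟩
  have hderiv := h3 C (insert x {a, b}) (by rw [card_insert_of_notMem hxab, card_pair hab])
  rw [setDeriv_insert f hxab hxC, setDeriv_pair f hab ha.2 hb.2,
    setDeriv_pair f hab (by simpa using ha) (by simpa using hb)] at hderiv
  linarith

lemma mutcov_singleton_union_le (hmono : Monotone f) (hsub : IsSubmodular f)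
    (h3 : IsThreeIncreasing f) (a b : V) (C E : Finset V) :
    mutcov f {a} {b} (C ∪ E) ≤ mutcov f {a} {b} C := by
  induction E using Finset.induction_on with
  | empty => rw [union_empty]
  | insert x E _ ih =>
    rw [union_insert]
    exact (mutcov_singleton_insert_le f hmono hsub h3 a b x (C ∪ E)).trans ih

lemma margS_sub_margS_union_le_sum (hmono : Monotone f) (hsub : IsSubmodular f)
    (h3 : IsThreeIncreasing f) (b : V) (C T : Finset V) :
    margS f {b} C - margS f {b} (C ∪ T) ≤ ∑ s ∈ T, mutcov f {s} {b} C := by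
  induction T using Finset.induction_on with
  | empty => simp
  | insert s T hsT ih =>
    have hsplit := mutcov_singleton_eq_sub f s b (C ∪ T)
    have hshrink := mutcov_singleton_union_le f hmono hsub h3 s b C T
    rw [sum_insert hsT, union_insert]
    linarith

lemma margS_le_sum_mutcov [Fintype V] (hmono : Monotone f) (hsub : IsSubmodular f)
    (h3 : IsThreeIncreasing f) {S : Finset V} (hS : f S = f univ) (b : V) (C : Finset V) :
    margS f {b} C ≤ ∑ s ∈ S, mutcov f {s} {b} C := by
  have h := margS_sub_margS_union_le_sum f hmono hsub h3 b C S
  rwa [margS_eq_zero_of_subset f hmono hS subset_union_right, sub_zero] at h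

end SetFunction

section Permutation

variable {V : Type*} [DecidableEq V] {n : ℕ}

lemma pref_succ (π : Fin n → V) (i : Fin n) : pref π (i + 1) = insert (π i) (pref π i) := by
  rw [pref, pref, ← image_insert]
  congr 1
  ext j
  simp only [mem_filter, mem_univ, true_and, mem_insert, Fin.ext_iff]
  omega

lemma mem_pref (π : Fin n → V) {q : Fin n} {k : ℕ} (hq : (q : ℕ) < k) : π q ∈ pref π k :=
  mem_image_of_mem π (mem_filter.2 ⟨mem_univ q, hq⟩)

lemma sum_mutcov_pref_eq_sub (f : Finset V → ℝ) (π : Fin n → V) (b : V) (D : Finset V)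
    {p e : ℕ} (hpe : p ≤ e) (hen : e ≤ n) :
    ∑ i ∈ univ.filter (fun i : Fin n => p ≤ i ∧ i < e), mutcov f {π i} {b} (pref π i ∪ D)
      = margS f {b} (pref π p ∪ D) - margS f {b} (pref π e ∪ D) := by
  set G : ℕ → ℝ := fun k => margS f {b} (pref π k ∪ D)
  have hterm (i : Fin n) : mutcov f {π i} {b} (pref π i ∪ D) = -(G (i + 1) - G i) := by
    rw [neg_sub, mutcov_singleton_eq_sub, ← insert_union, ← pref_succ]
  have himage : (univ.filter fun i : Fin n => p ≤ i ∧ i < e).image Fin.val = Ico p e := by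
    ext k
    simp only [mem_image, mem_filter, mem_univ, true_and, mem_Ico]
    exact ⟨fun ⟨i, hi, hik⟩ => hik ▸ hi, fun hk => ⟨⟨k, by omega⟩, hk, rfl⟩⟩
  rw [sum_congr rfl fun i _ => hterm i, sum_neg_distrib,
    ← sum_image (g := Fin.val) (f := fun k => G (k + 1) - G k) Fin.val_injective.injOn, himage,
    sum_Ico_sub G hpe, neg_sub]

end Permutation

section WeightedCoverage

variable {V : Type*} [DecidableEq V] {n : ℕ} (f : Finset V → ℝ) (c : V → ℝ)

/-- `mff_{π′}(u)` for a permutation `π′` that places `u` right after `π_{1:k}`. -/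
noncomputable def mffAt (π ψ : Fin n → V) (k : ℕ) (u : V) : ℝ :=
  ∑ j : Fin n, mutcov f {u} {ψ j} (pref π k ∪ pref ψ j) / (c u * c (ψ j))

lemma mffw_eq_mffAt [Fintype V] (π ψ : Fin n → V) (i : Fin n) :
    mffw f c π ψ i = mffAt f c π ψ i (π i) :=
  rfl

lemma mffwMove_eq_mffAt [Fintype V] (π ψ : Fin n → V) (p q : Fin n) :
    mffwMove f c π ψ p q = mffAt f c π ψ p (π q) :=
  rfl

lemma mul_mffAt (π ψ : Fin n → V) (k : ℕ) {u : V} (hu : c u ≠ 0) :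
    c u * mffAt f c π ψ k u
      = ∑ j : Fin n, mutcov f {u} {ψ j} (pref π k ∪ pref ψ j) / c (ψ j) := by
  rw [mffAt, mul_sum]
  refine sum_congr rfl fun j _ => ?_
  rw [mul_div_assoc', mul_div_mul_left _ _ hu]

lemma mffAt_eq_zero_of_mem (π ψ : Fin n → V) {k : ℕ} {u : V} (hu : u ∈ pref π k) :
    mffAt f c π ψ k u = 0 :=
  sum_eq_zero fun j _ => by
    rw [mutcov_singleton_eq_zero_of_mem_left f (mem_union_left _ hu), zero_div]

lemma mffAt_nonneg (hmono : Monotone f) (hsub : IsSubmodular f) (hc : ∀ u, 0 < c u)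
    (π ψ : Fin n → V) (k : ℕ) (u : V) : 0 ≤ mffAt f c π ψ k u :=
  sum_nonneg fun j _ => div_nonneg (mutcov_singleton_nonneg f hmono hsub _ _ _)
    (mul_pos (hc u) (hc (ψ j))).le

lemma sum_mffw_mul_le_sum_mul_mffAt [Fintype V] (hmono : Monotone f) (hsub : IsSubmodular f)
    (h3 : IsThreeIncreasing f) (hc : ∀ u, 0 < c u) (π ψ : Fin n → V) {S : Finset V}
    (hS : f S = f univ) {p e : ℕ} (hpe : p ≤ e) (hen : e ≤ n) :
    ∑ i ∈ univ.filter (fun i : Fin n => p ≤ i ∧ i < e), mffw f c π ψ i * c (π i)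
      ≤ ∑ s ∈ S, c s * mffAt f c π ψ p s := by
  calc ∑ i ∈ univ.filter (fun i : Fin n => p ≤ i ∧ i < e), mffw f c π ψ i * c (π i)
      = ∑ j : Fin n, (∑ i ∈ univ.filter (fun i : Fin n => p ≤ i ∧ i < e),
          mutcov f {π i} {ψ j} (pref π i ∪ pref ψ j)) / c (ψ j) := by
        simp_rw [mffw_eq_mffAt, mul_comm _ (c _), mul_mffAt f c _ _ _ (hc _).ne', sum_div]
        exact sum_comm
    _ = ∑ j : Fin n, (margS f {ψ j} (pref π p ∪ pref ψ j)
          - margS f {ψ j} (pref π e ∪ pref ψ j)) / c (ψ j) := by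
        simp_rw [sum_mutcov_pref_eq_sub f π _ _ hpe hen]
    _ ≤ ∑ j : Fin n, (∑ s ∈ S, mutcov f {s} {ψ j} (pref π p ∪ pref ψ j)) / c (ψ j) := by
        gcongr with j
        · exact (hc _).le
        · exact (sub_le_self _ (margS_nonneg f hmono _ _)).trans
            (margS_le_sum_mutcov f hmono hsub h3 hS _ _)
    _ = ∑ s ∈ S, c s * mffAt f c π ψ p s := by
        simp_rw [mul_mffAt f c _ _ _ (hc _).ne', sum_div]
        exact sum_comm

lemma mffAt_le_mul_mffw [Fintype V] (hmono : Monotone f) (hsub : IsSubmodular f)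
    (hc : ∀ u, 0 < c u) {γ : ℝ} (hγ : 1 ≤ γ) (π : Fin n ≃ V) (ψ : Fin n → V)
    (hNoSwaps : Antitone (mffw f c π ψ))
    (hNoMoves : ∀ p q : Fin n, p < q →
      ∃ i : Fin n, p ≤ i ∧ i < q ∧ mffwMove f c π ψ p q < γ * mffw f c π ψ i)
    (p : Fin n) (u : V) : mffAt f c π ψ p u ≤ γ * mffw f c π ψ p := by
  have hp : 0 ≤ mffw f c π ψ p := mffAt_nonneg f c hmono hsub hc _ _ _ _
  obtain ⟨q, rfl⟩ := π.surjective u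
  rcases lt_trichotomy q p with hqp | rfl | hpq
  · rw [mffAt_eq_zero_of_mem f c _ _ (mem_pref π hqp)]
    exact mul_nonneg (zero_le_one.trans hγ) hp
  · exact le_mul_of_one_le_left hp hγ
  · obtain ⟨i, hpi, -, hmove⟩ := hNoMoves p q hpq
    rw [← mffwMove_eq_mffAt]
    exact hmove.le.trans (mul_le_mul_of_nonneg_left (hNoSwaps hpi) (zero_le_one.trans hγ))

end WeightedCoverage

lemma Antitone.le_apply_iff_lt_card_filter {α : Type*} [LinearOrder α] {n : ℕ} {m : Fin n → α}
    (hm : Antitone m) (t : α) (i : Fin n) :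
    t ≤ m i ↔ (i : ℕ) < #(univ.filter fun k => t ≤ m k) := by
  constructor
  · intro hi
    have hIic : Iic i ⊆ univ.filter fun k => t ≤ m k := fun j hj =>
      mem_filter.2 ⟨mem_univ j, hi.trans (hm (mem_Iic.1 hj))⟩
    have := card_le_card hIic
    rw [Fin.card_Iic] at this
    omega
  · intro hi
    by_contra hti
    have hIio : (univ.filter fun k => t ≤ m k) ⊆ Iio i := fun j hj =>
      mem_Iio.2 (lt_of_not_ge fun hij => hti ((mem_filter.1 hj).2.trans (hm hij)))
    have := card_le_card hIio
    rw [Fin.card_Iio] at this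
    omega

theorem level_cost_bound_general {V : Type*} [Fintype V] [DecidableEq V]
    (f : Finset V → ℝ)
    (hmono : ∀ A B : Finset V, A ⊆ B → f A ≤ f B)
    (hsub : ∀ A B : Finset V, f (A ∪ B) + f (A ∩ B) ≤ f A + f B)
    (h3 : ∀ (S A : Finset V), A.card = 3 → 0 ≤ setDeriv f A S)
    (c : V → ℝ) (hc : ∀ u : V, 0 < c u)
    (γ : ℝ) (hγ : 1 < γ)
    (π ψ : Fin (Fintype.card V) ≃ V)
    (hNoSwaps : ∀ i j : Fin (Fintype.card V), i ≤ j → mffw f c π ψ j ≤ mffw f c π ψ i)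
    (hNoMoves : ∀ p q : Fin (Fintype.card V), p < q →
      ∃ i : Fin (Fintype.card V), p ≤ i ∧ i < q ∧
        mffwMove f c π ψ p q < γ * mffw f c π ψ i) :
    ∀ ℓ : ℕ, 0 < ℓ → ∀ Sstar : Finset V, f Sstar = f Finset.univ →
      ∑ u ∈ (Finset.univ.filter fun i : Fin (Fintype.card V) =>
          γ ^ ℓ ≤ mffw f c π ψ i ∧ mffw f c π ψ i < γ ^ (ℓ + 1)).image π, c u
        ≤ γ ^ 2 * ∑ u ∈ Sstar, c u := by
  intro ℓ _ S hS
  have hmono' : Monotone f := fun A B h => hmono A B h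
  set m := mffw f c π ψ
  have hanti : Antitone m := fun i j hij => hNoSwaps i j hij
  set p := #(univ.filter fun i => γ ^ (ℓ + 1) ≤ m i)
  set e := #(univ.filter fun i => γ ^ ℓ ≤ m i)
  have hp (i) : γ ^ (ℓ + 1) ≤ m i ↔ (i : ℕ) < p := hanti.le_apply_iff_lt_card_filter _ i
  have he (i) : γ ^ ℓ ≤ m i ↔ (i : ℕ) < e := hanti.le_apply_iff_lt_card_filter _ i
  set B := univ.filter fun i : Fin (Fintype.card V) => p ≤ i ∧ i < e
  have hlevel : (univ.filter fun i => γ ^ ℓ ≤ m i ∧ m i < γ ^ (ℓ + 1)) = B :=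
    filter_congr fun i _ => by rw [he, ← not_le (b := m i), hp, not_lt, and_comm]
  rw [hlevel, sum_image π.injective.injOn]
  rcases B.eq_empty_or_nonempty with hB | ⟨i₀, hi₀⟩
  · rw [hB, sum_empty]
    exact mul_nonneg (sq_nonneg γ) (sum_nonneg fun u _ => (hc u).le)
  obtain ⟨hpi₀, hi₀e⟩ := (mem_filter.1 hi₀).2
  let p' : Fin (Fintype.card V) := ⟨p, hpi₀.trans_lt i₀.isLt⟩
  have hmp : m p' < γ ^ (ℓ + 1) := lt_of_not_ge fun h => lt_irrefl p ((hp p').1 h)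
  have hγ₀ : 0 < γ := zero_lt_one.trans hγ
  refine le_of_mul_le_mul_left ?_ (pow_pos hγ₀ ℓ)
  calc γ ^ ℓ * ∑ i ∈ B, c (π i) ≤ ∑ i ∈ B, m i * c (π i) := by
        rw [mul_sum]
        exact sum_le_sum fun i hi => mul_le_mul_of_nonneg_right
          ((he i).2 (mem_filter.1 hi).2.2) (hc _).le
    _ ≤ ∑ s ∈ S, c s * mffAt f c π ψ p s :=
        sum_mffw_mul_le_sum_mul_mffAt f c hmono' hsub h3 hc π ψ hS (hpi₀.trans hi₀e.le)
          ((card_filter_le _ _).trans (card_fin _).le)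
    _ ≤ ∑ s ∈ S, c s * (γ * γ ^ (ℓ + 1)) := by
        refine sum_le_sum fun s _ => mul_le_mul_of_nonneg_left ?_ (hc s).le
        exact (mffAt_le_mul_mffw f c hmono' hsub hc hγ.le π ψ hanti hNoMoves p' s).trans
          (mul_le_mul_of_nonneg_left hmp.le hγ₀.le)
    _ = γ ^ ℓ * (γ ^ 2 * ∑ u ∈ S, c u) := by
        rw [← sum_mul]
        ring

/-- Each level is inexpensive: if `f` is monotone, submodular and `3`-increasing and `π` has
no swaps and no `γ`-moves with respect to the weighted coverage `mff_π`, then for every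
`ℓ > 0`, the cost of the level `L_ℓ = {u : γ^ℓ ≤ mff_π(u) < γ^{ℓ+1}}` is at most
`γ²` times the cost of any full cover `S*`. -/
theorem level_cost_bound {V : Type*} [Fintype V] [DecidableEq V]
    (f : Finset V → ℝ)
    (hmono : ∀ A B : Finset V, A ⊆ B → f A ≤ f B)
    (hsub : ∀ A B : Finset V, f (A ∪ B) + f (A ∩ B) ≤ f A + f B)
    (h3 : ∀ (S A : Finset V), A.card = 3 → 0 ≤ setDeriv f A S)
    (hf0 : f ∅ = 0)
    (c : V → ℝ) (hc : ∀ u : V, 0 < c u)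
    (γ : ℝ) (hγ : 1 < γ)
    (π ψ : Fin (Fintype.card V) ≃ V)
    (hψ : ∀ j j' : Fin (Fintype.card V), j ≤ j' → c (ψ j) ≤ c (ψ j'))
    (hNoSwaps : ∀ i j : Fin (Fintype.card V), i ≤ j → mffw f c π ψ j ≤ mffw f c π ψ i)
    (hNoMoves : ∀ p q : Fin (Fintype.card V), p < q →
      ∃ i : Fin (Fintype.card V), p ≤ i ∧ i < q ∧
        mffwMove f c π ψ p q < γ * mffw f c π ψ i) :
    ∀ ℓ : ℕ, 0 < ℓ → ∀ Sstar : Finset V, f Sstar = f Finset.univ →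
      ∑ u ∈ (Finset.univ.filter fun i : Fin (Fintype.card V) =>
          γ ^ ℓ ≤ mffw f c π ψ i ∧ mffw f c π ψ i < γ ^ (ℓ + 1)).image π, c u
        ≤ γ ^ 2 * ∑ u ∈ Sstar, c u :=
  level_cost_bound_general f hmono hsub h3 c hc γ hγ π ψ hNoSwaps hNoMoves
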